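/- arXiv:2401.13412 — 5 statements merged into one kernel-verified Lean document; each statement's English description precedes it below -/
import Mathlib

section
/- If X^ν is pairwise independent (i.e., X^ν_a and X^ν_b are independent for all a ≠ b), then for every finite A ⊆ S, P(X^ν ≡ 0 on A) = ∏_{a∈A} P(X^ν_a = 0); that is, X^ν is an independent process. -/
/-!
Write `S_i = {T | i ∈ T}`. Inclusion–exclusion for `ν` gives the correlation formula
`P(X_a = 0, X_b = 0) = P(X_a = 0) P(X_b = 0) exp (ν (S_a ∩ S_b))`, so independence of `X_a` and
`X_b` forces `ν (S_a ∩ S_b) = 0`. Then `ν` is additive on the finite unions `⋃_{a ∈ A} S_a`, and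
`exp` turns the sum `∑_{a ∈ A} ν S_a` into the product `∏_{a ∈ A} P(X_a = 0)`.
-/

open MeasureTheory ProbabilityTheory Finset Real

def IsPoissonRepresentable {S Ω : Type*} [MeasurableSpace Ω] (P : Measure Ω)
    (ν : Measure (Set S)) (X : S → Ω → Bool) : Prop :=
  ∀ A : Finset S,
    P {ω | ∀ i ∈ A, X i ω = false} = ENNReal.ofReal (exp (-ν.real {T | ∃ i ∈ A, i ∈ T}))

lemma setOf_exists_mem_finset_eq_biUnion {S : Type*} (A : Finset S) :
    {T : Set S | ∃ i ∈ A, i ∈ T} = ⋃ i ∈ A, {T | i ∈ T} := by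
  ext T
  simp

lemma exp_neg_measureReal_union {α : Type*} [MeasurableSpace α] (μ : Measure α) {s t : Set α}
    (ht : MeasurableSet t) (hs : μ s ≠ ⊤) (ht' : μ t ≠ ⊤) :
    exp (-μ.real (s ∪ t)) = exp (-μ.real s) * exp (-μ.real t) * exp (μ.real (s ∩ t)) := by
  have := measureReal_union_add_inter ht hs ht'
  rw [← exp_add, ← exp_add]
  congr 1
  linarith

namespace IsPoissonRepresentable

variable {S Ω : Type*} [MeasurableSpace Ω] {P : Measure Ω} {ν : Measure (Set S)}
  {X : S → Ω → Bool}

lemma measure_eq_false (h : IsPoissonRepresentable P ν X) (a : S) :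
    P {ω | X a ω = false} = ENNReal.ofReal (exp (-ν.real {T | a ∈ T})) := by
  simpa using h {a}

lemma measure_inter_eq_false (h : IsPoissonRepresentable P ν X) (a b : S) :
    P ({ω | X a ω = false} ∩ {ω | X b ω = false})
      = ENNReal.ofReal (exp (-ν.real ({T | a ∈ T} ∪ {T | b ∈ T}))) := by
  classical
  simpa [Set.ofPred_and, Set.ofPred_or] using h {a, b}

lemma measure_inter_eq_zero_of_indepFun (h : IsPoissonRepresentable P ν X) {a b : S}
    (ha : ν {T | a ∈ T} ≠ ⊤) (hb : ν {T | b ∈ T} ≠ ⊤) (hind : IndepFun (X a) (X b) P) :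
    ν ({T | a ∈ T} ∩ {T | b ∈ T}) = 0 := by
  have hmul : P ({ω | X a ω = false} ∩ {ω | X b ω = false})
      = P {ω | X a ω = false} * P {ω | X b ω = false} :=
    hind.measure_inter_preimage_eq_mul {false} {false} (measurableSet_singleton _)
      (measurableSet_singleton _)
  rw [h.measure_inter_eq_false, h.measure_eq_false, h.measure_eq_false,
    ← ENNReal.ofReal_mul (exp_pos _).le,
    ENNReal.ofReal_eq_ofReal_iff (exp_pos _).le (by positivity),
    exp_neg_measureReal_union ν (measurableSet_mem b) ha hb] at hmul
  have hcorr : exp (ν.real ({T | a ∈ T} ∩ {T | b ∈ T})) = 1 :=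
    (mul_eq_left₀ (by positivity)).mp hmul
  rwa [exp_eq_one_iff, measureReal_eq_zero_iff (measure_ne_top_of_subset Set.inter_subset_left ha)]
    at hcorr

lemma measure_eq_prod (h : IsPoissonRepresentable P ν X) (hfin : ∀ i : S, ν {T | i ∈ T} ≠ ⊤)
    (hnull : ∀ a b : S, a ≠ b → ν ({T | a ∈ T} ∩ {T | b ∈ T}) = 0) (A : Finset S) :
    P {ω | ∀ i ∈ A, X i ω = false} = ∏ a ∈ A, P {ω | X a ω = false} := by
  rw [h A, setOf_exists_mem_finset_eq_biUnion,
    measureReal_biUnion_finset₀ (fun a _ b _ hab => hnull a b hab)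
      (fun i _ => (measurableSet_mem i).nullMeasurableSet) (fun i _ => hfin i),
    ← sum_neg_distrib, exp_sum, ENNReal.ofReal_prod_of_nonneg fun _ _ => (exp_pos _).le]
  exact prod_congr rfl fun a _ => (h.measure_eq_false a).symm

end IsPoissonRepresentable

theorem stmt2_general {S : Type*}
    {Ω : Type*} [MeasurableSpace Ω] (P : Measure Ω)
    (ν : Measure (Set S)) (hfin : ∀ i : S, ν {T : Set S | i ∈ T} ≠ ⊤)
    (X : S → Ω → Bool)
    (hrep : ∀ A : Finset S,
      P {ω | ∀ i ∈ A, X i ω = false}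
        = ENNReal.ofReal (Real.exp (-(ν {T : Set S | ∃ i ∈ A, i ∈ T}).toReal)))
    (hpair : ∀ a b : S, a ≠ b → IndepFun (X a) (X b) P) :
    ∀ A : Finset S,
      P {ω | ∀ i ∈ A, X i ω = false} = ∏ a ∈ A, P {ω | X a ω = false} := by
  have hX : IsPoissonRepresentable P ν X := hrep
  exact hX.measure_eq_prod hfin fun a b hab =>
    hX.measure_inter_eq_zero_of_indepFun (hfin a) (hfin b) (hpair a b hab)

/-- Let `S` be countable and `X = X^ν` a Poisson representable process,
i.e. `P(X ≡ 0 on A) = exp (-ν (𝓢_A^∪))` for all finite `A ⊆ S`, with `ν (𝓢_i) < ∞` for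
each `i`.  If `X` is pairwise independent (`X_a` and `X_b` independent for all `a ≠ b`),
then for every finite `A ⊆ S`, `P(X ≡ 0 on A) = ∏_{a ∈ A} P(X_a = 0)`; that is, `X` is
an independent process. -/
theorem stmt2 {S : Type*} [Countable S]
    {Ω : Type*} [MeasurableSpace Ω] (P : Measure Ω) [IsProbabilityMeasure P]
    (ν : Measure (Set S)) (hfin : ∀ i : S, ν {T : Set S | i ∈ T} ≠ ⊤)
    (X : S → Ω → Bool)
    (hrep : ∀ A : Finset S,
      P {ω | ∀ i ∈ A, X i ω = false}
        = ENNReal.ofReal (Real.exp (-(ν {T : Set S | ∃ i ∈ A, i ∈ T}).toReal)))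
    (hpair : ∀ a b : S, a ≠ b → IndepFun (X a) (X b) P) :
    ∀ A : Finset S,
      P {ω | ∀ i ∈ A, X i ω = false} = ∏ a ∈ A, P {ω | X a ω = false} :=
  stmt2_general P ν hfin X hrep hpair
end

section
/- Let σ be a uniformly random permutation of {1,2,3} and X_j = 1 if σ(j) = j. Then there is no nonnegative measure ν on the nonempty subsets of {1,2,3} such that X = X^ν, i.e., such that P(X ≡ 0 on I) = exp(-ν(S_I^∪)) for all I ⊆ {1,2,3}. -/
open MeasureTheory ProbabilityTheory Finset

instance : MeasurableSpace (Equiv.Perm (Fin 3)) := ⊤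

lemma meas_eq (I : Finset (Fin 3)) :
    (PMF.uniformOfFintype (Equiv.Perm (Fin 3))).toMeasure {σ | ∀ j ∈ I, σ j ≠ j}
    = ((Finset.univ.filter (fun σ : Equiv.Perm (Fin 3) => ∀ j ∈ I, σ j ≠ j)).card : ENNReal) * 6⁻¹ := by
  rw [PMF.toMeasure_apply_fintype]
  simp [Set.indicator, PMF.uniformOfFintype_apply, Finset.sum_ite, Fintype.card_perm]
  norm_num [Nat.factorial]

/-- Let `σ` be a uniformly random permutation of `{1,2,3}` and let
`X_j = 1` iff `σ(j) = j`.  Then there is no nonnegative measure `ν` on the nonempty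
subsets of `{1,2,3}` such that `X = X^ν`, i.e. such that
`P(X ≡ 0 on I) = exp (-ν (𝓢_I^∪))` for all `I ⊆ {1,2,3}`. -/
theorem stmt6 :
    ¬ ∃ ν : Finset (Fin 3) → ℝ, (∀ T, 0 ≤ ν T) ∧
      ∀ I : Finset (Fin 3),
        (PMF.uniformOfFintype (Equiv.Perm (Fin 3))).toMeasure {σ | ∀ j ∈ I, σ j ≠ j}
          = ENNReal.ofReal
              (Real.exp
                (-(∑ T ∈ Finset.univ.filter
                      (fun T : Finset (Fin 3) => T.Nonempty ∧ (T ∩ I).Nonempty), ν T))) := by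
  rintro ⟨ν, hν, h⟩
  -- abbreviation for the exponent sums
  set f : Finset (Fin 3) → ℝ :=
    fun I => ∑ T ∈ Finset.univ.filter
      (fun T : Finset (Fin 3) => T.Nonempty ∧ (T ∩ I).Nonempty), ν T with hf
  -- convert hypothesis at I to a real equation
  have key : ∀ (I : Finset (Fin 3)) (c : ℕ),
      (Finset.univ.filter (fun σ : Equiv.Perm (Fin 3) => ∀ j ∈ I, σ j ≠ j)).card = c →
      Real.exp (-(f I)) = c / 6 := by
    intro I c hc
    have h1 := h I
    rw [meas_eq, hc] at h1
    have h2 : ((c : ENNReal) * 6⁻¹) = ENNReal.ofReal ((c : ℝ) / 6) := by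
      rw [ENNReal.ofReal_div_of_pos (by norm_num)]
      simp [ENNReal.ofReal_natCast, div_eq_mul_inv]
    rw [h2] at h1
    exact ((ENNReal.ofReal_eq_ofReal_iff (by positivity) (Real.exp_nonneg _)).mp h1).symm
  have huniv : Real.exp (-(f Finset.univ)) = 2/6 := key _ 2 (by decide)
  have h01 : Real.exp (-(f {0,1})) = 3/6 := key _ 3 (by decide)
  have h02 : Real.exp (-(f {0,2})) = 3/6 := key _ 3 (by decide)
  have h12 : Real.exp (-(f {1,2})) = 3/6 := key _ 3 (by decide)
  -- exponent sums as logs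
  have lupos : (0:ℝ) < 2/6 := by norm_num
  have hfu : f Finset.univ = Real.log 3 := by
    have := congrArg Real.log huniv
    rw [Real.log_exp] at this
    have : f Finset.univ = -Real.log (2/6) := by linarith
    rw [this]
    rw [show (2:ℝ)/6 = 3⁻¹ by norm_num, Real.log_inv]
    ring
  have hpair : ∀ I : Finset (Fin 3),
      Real.exp (-(f I)) = 3/6 → f I = Real.log 2 := by
    intro I hI
    have := congrArg Real.log hI
    rw [Real.log_exp] at this
    have h3 : f I = -Real.log (3/6) := by linarith
    rw [h3, show (3:ℝ)/6 = 2⁻¹ by norm_num, Real.log_inv]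
    ring
  -- splitting: f univ = f {i,j} + ν {k}
  have split : ∀ (I : Finset (Fin 3)) (k : Fin 3),
      (Finset.univ.filter (fun T : Finset (Fin 3) => T.Nonempty ∧ (T ∩ (Finset.univ : Finset (Fin 3))).Nonempty))
        = insert {k} (Finset.univ.filter (fun T : Finset (Fin 3) => T.Nonempty ∧ (T ∩ I).Nonempty)) →
      ({k} : Finset (Fin 3)) ∉ (Finset.univ.filter (fun T : Finset (Fin 3) => T.Nonempty ∧ (T ∩ I).Nonempty)) →
      f Finset.univ = ν {k} + f I := by
    intro I k h1 h2
    simp only [hf, h1, Finset.sum_insert h2]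
  have s01 : f Finset.univ = ν {2} + f {0,1} := split _ _ (by decide) (by decide)
  have s02 : f Finset.univ = ν {1} + f {0,2} := split _ _ (by decide) (by decide)
  have s12 : f Finset.univ = ν {0} + f {1,2} := split _ _ (by decide) (by decide)
  -- lower bound on f univ
  have hsub : ({{0},{1},{2}} : Finset (Finset (Fin 3))) ⊆
      Finset.univ.filter (fun T : Finset (Fin 3) => T.Nonempty ∧ (T ∩ (Finset.univ : Finset (Fin 3))).Nonempty) := by
    decide
  have hlow : ν {0} + ν {1} + ν {2} ≤ f Finset.univ := by
    have := Finset.sum_le_sum_of_subset_of_nonneg hsub (fun i _ _ => hν i)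
    have hsum : ∑ T ∈ ({{0},{1},{2}} : Finset (Finset (Fin 3))), ν T = ν {0} + ν {1} + ν {2} := by
      rw [Finset.sum_insert (by decide), Finset.sum_insert (by decide), Finset.sum_singleton]
      ring
    rw [hsum] at this
    exact this
  -- numbers
  have e01 := hpair _ h01
  have e02 := hpair _ h02
  have e12 := hpair _ h12
  have l23 : Real.log 2 < Real.log 3 := Real.log_lt_log (by norm_num) (by norm_num)
  have l89 : Real.log 8 < Real.log 9 := Real.log_lt_log (by norm_num) (by norm_num)
  have l8 : Real.log 8 = 3 * Real.log 2 := by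
    rw [show (8:ℝ) = 2^3 by norm_num, Real.log_pow]; push_cast; ring
  have l9 : Real.log 9 = 2 * Real.log 3 := by
    rw [show (9:ℝ) = 3^2 by norm_num, Real.log_pow]; push_cast; ring
  linarith
end

section
/- Let μ be the permutation-and-spin-flip invariant probability measure on {0,1}^3 with p_1 = P(X ≡ 1) ∈ [1/8, 1/2]. Then μ = X^ν where ν gives each singleton weight log((p_1+p_2)/p_1), each doubleton weight log(p_1/(2(p_1+p_2)^2)), and the full set weight log(8(p_1+p_2)^3/p_1), where p_2 = (1-2p_1)/6, and all these weights are nonnegative. -/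
set_option maxHeartbeats 1600000


open MeasureTheory ProbabilityTheory Finset

/-- Let `μ` be a probability measure on `{0,1}^3` invariant under
coordinate permutations and under interchanging `0` and `1`, with
`p₁ = μ(X ≡ 1) ∈ [1/8, 1/2]`.  Set `p₂ = (1 - 2 p₁)/6`.  Then `μ = X^ν` where `ν`
gives each singleton weight `log ((p₁+p₂)/p₁)`, each doubleton weight
`log (p₁ / (2 (p₁+p₂)²))`, and the full set weight `log (8 (p₁+p₂)³ / p₁)`, and all
these weights are nonnegative. -/
theorem stmt7 (μ : Measure (Fin 3 → Bool)) [IsProbabilityMeasure μ]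
    (hperm : ∀ σ : Equiv.Perm (Fin 3), Measure.map (fun f => f ∘ σ) μ = μ)
    (hflip : Measure.map (fun f i => !(f i)) μ = μ)
    (p1 : ℝ) (hp1 : μ {f | ∀ i, f i = true} = ENNReal.ofReal p1)
    (hlow : 1 / 8 ≤ p1) (hhigh : p1 ≤ 1 / 2) :
    ∀ ν : Finset (Fin 3) → ℝ,
      (ν = fun T =>
        if T.card = 1 then Real.log ((p1 + (1 - 2 * p1) / 6) / p1)
        else if T.card = 2 then Real.log (p1 / (2 * (p1 + (1 - 2 * p1) / 6) ^ 2))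
        else if T.card = 3 then Real.log (8 * (p1 + (1 - 2 * p1) / 6) ^ 3 / p1)
        else 0) →
      (∀ T, 0 ≤ ν T) ∧
      ∀ I : Finset (Fin 3),
        μ {f | ∀ i ∈ I, f i = false}
          = ENNReal.ofReal
              (Real.exp
                (-(∑ T ∈ Finset.univ.filter
                      (fun T : Finset (Fin 3) => (T ∩ I).Nonempty), ν T))) := by
  intro ν hν
  have hp1pos : (0:ℝ) < p1 := by linarith
  have hp2nn : (0:ℝ) ≤ (1 - 2*p1)/6 := by linarith
  have hxpos : (0:ℝ) < p1 + (1 - 2*p1)/6 := by linarith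
  -- ν values
  have ν1 : ∀ T : Finset (Fin 3), T.card = 1 →
      ν T = Real.log ((p1 + (1 - 2 * p1) / 6) / p1) := fun T h => by rw [hν]; simp [h]
  have ν2 : ∀ T : Finset (Fin 3), T.card = 2 →
      ν T = Real.log (p1 / (2 * (p1 + (1 - 2 * p1) / 6) ^ 2)) := fun T h => by
    rw [hν]; simp [h]
  have ν3 : ∀ T : Finset (Fin 3), T.card = 3 →
      ν T = Real.log (8 * (p1 + (1 - 2 * p1) / 6) ^ 3 / p1) := fun T h => by
    rw [hν]; simp [h]
  constructor
  · -- nonnegativity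
    intro T
    rw [hν]
    dsimp only
    split_ifs
    · apply Real.log_nonneg
      rw [le_div_iff₀ hp1pos]; linarith
    · apply Real.log_nonneg
      rw [le_div_iff₀ (by positivity)]
      nlinarith [mul_nonneg (by linarith : (0:ℝ) ≤ p1 - 1/8) (by linarith : (0:ℝ) ≤ 1/2 - p1)]
    · apply Real.log_nonneg
      rw [le_div_iff₀ hp1pos]
      nlinarith [mul_nonneg (sq_nonneg (p1 - 1/8)) (by linarith : (0:ℝ) ≤ p1 + 1)]
    · exact le_refl 0
  -- now the measure identities
  have hmeas : ∀ s : Set (Fin 3 → Bool), MeasurableSet s := fun s => s.toFinite.measurableSet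
  have hsum : ∀ S : Finset (Fin 3 → Bool), μ ↑S = ∑ a ∈ S, μ {a} := by
    intro S
    rw [show (↑S : Set (Fin 3 → Bool)) = ⋃ a ∈ S, {a} by ext; simp]
    exact measure_biUnion_finset (fun a _ b _ hab => by simpa using hab)
      (fun b _ => measurableSet_singleton b)
  have hpermS : ∀ (σ : Equiv.Perm (Fin 3)) (a b : Fin 3 → Bool),
      a ∘ ⇑σ = b → μ {a} = μ {b} := by
    intro σ a b hab
    have hmσ : Measurable (fun f : Fin 3 → Bool => f ∘ ⇑σ.symm) :=
      measurable_pi_lambda _ fun i => measurable_pi_apply (σ.symm i)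
    calc μ {a} = Measure.map (fun f : Fin 3 → Bool => f ∘ ⇑σ.symm) μ {a} := by
          rw [hperm σ.symm]
      _ = μ ((fun f : Fin 3 → Bool => f ∘ ⇑σ.symm) ⁻¹' {a}) :=
          Measure.map_apply hmσ (hmeas _)
      _ = μ {b} := by
          congr 1
          ext f
          simp only [Set.mem_preimage, Set.mem_singleton_iff]
          constructor
          · intro h; subst hab; funext i
            have := congrFun h (σ i); simpa using this
          · intro h; subst h; subst hab; funext i; simp
  have hflipS : ∀ (a b : Fin 3 → Bool), (fun i => !(a i)) = b → μ {a} = μ {b} := by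
    intro a b hab
    have hmf : Measurable (fun (f : Fin 3 → Bool) i => !(f i)) :=
      measurable_pi_lambda _ fun i =>
        (measurable_from_top : Measurable not).comp (measurable_pi_apply i)
    calc μ {a} = Measure.map (fun (f : Fin 3 → Bool) i => !(f i)) μ {a} := by rw [hflip]
      _ = μ ((fun (f : Fin 3 → Bool) i => !(f i)) ⁻¹' {a}) := Measure.map_apply hmf (hmeas _)
      _ = μ {b} := by
          congr 1
          ext f
          simp only [Set.mem_preimage, Set.mem_singleton_iff]
          constructor
          · intro h; subst hab; funext i
            rw [← h]; simp
          · intro h; subst h; subst hab; funext i; simp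
  -- singleton values
  have hA : μ {(![true,true,true] : Fin 3 → Bool)} = ENNReal.ofReal p1 := by
    rw [← hp1]
    congr 1
    ext f
    simp only [Set.mem_singleton_iff, Set.mem_setOf_eq]
    constructor
    · intro h; intro i; subst h; fin_cases i <;> rfl
    · intro h; funext i; fin_cases i <;> simp [h]
  have hA0 : μ {(![false,false,false] : Fin 3 → Bool)} = ENNReal.ofReal p1 :=
    ((hflipS ![true,true,true] ![false,false,false] (by funext i; fin_cases i <;> rfl)).symm).trans hA
  set q := μ {(![true,false,false] : Fin 3 → Bool)} with hqdef
  have hq2 : μ {(![false,true,false] : Fin 3 → Bool)} = q :=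
    hpermS (Equiv.swap 0 1) ![false,true,false] ![true,false,false]
      (by funext i; fin_cases i <;> rfl)
  have hq3 : μ {(![false,false,true] : Fin 3 → Bool)} = q :=
    hpermS (Equiv.swap 0 2) ![false,false,true] ![true,false,false]
      (by funext i; fin_cases i <;> rfl)
  have hq4 : μ {(![false,true,true] : Fin 3 → Bool)} = q :=
    hflipS ![false,true,true] ![true,false,false] (by funext i; fin_cases i <;> rfl)
  have hq5 : μ {(![true,false,true] : Fin 3 → Bool)} = q :=
    (hflipS ![true,false,true] ![false,true,false] (by funext i; fin_cases i <;> rfl)).trans hq2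
  have hq6 : μ {(![true,true,false] : Fin 3 → Bool)} = q :=
    (hflipS ![true,true,false] ![false,false,true] (by funext i; fin_cases i <;> rfl)).trans hq3
  -- total mass
  have huniv : μ (Set.univ) = 1 := measure_univ
  rw [show (Set.univ : Set (Fin 3 → Bool)) = ↑(Finset.univ : Finset (Fin 3 → Bool)) by simp,
    hsum] at huniv
  rw [show (Finset.univ : Finset (Fin 3 → Bool)) =
      {![false,false,false], ![true,false,false], ![false,true,false], ![false,false,true],
       ![true,true,false], ![true,false,true], ![false,true,true], ![true,true,true]}
    from by decide] at huniv
  rw [Finset.sum_insert (by decide), Finset.sum_insert (by decide),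
    Finset.sum_insert (by decide), Finset.sum_insert (by decide),
    Finset.sum_insert (by decide), Finset.sum_insert (by decide),
    Finset.sum_insert (by decide), Finset.sum_singleton] at huniv
  rw [hA0, hA, hq2, hq3, hq4, hq5, hq6] at huniv
  have huniv' : 2 * ENNReal.ofReal p1 + 6 * q = 1 := by rw [← huniv]; ring
  have hone : 2 * ENNReal.ofReal p1 + 6 * ENNReal.ofReal ((1 - 2*p1)/6) = 1 := by
    rw [show (2 : ENNReal) = ENNReal.ofReal 2 by norm_num,
      show (6 : ENNReal) = ENNReal.ofReal 6 by norm_num,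
      ← ENNReal.ofReal_mul (by norm_num), ← ENNReal.ofReal_mul (by norm_num),
      ← ENNReal.ofReal_add (by linarith) (by linarith),
      show 2 * p1 + 6 * ((1 - 2*p1)/6) = 1 by ring, ENNReal.ofReal_one]
  have hqv : q = ENNReal.ofReal ((1 - 2*p1)/6) := by
    have h6 : 6 * q = 6 * ENNReal.ofReal ((1 - 2*p1)/6) := by
      have h2 : 2 * ENNReal.ofReal p1 + 6 * q
          = 2 * ENNReal.ofReal p1 + 6 * ENNReal.ofReal ((1 - 2*p1)/6) := by
        rw [huniv', hone]
      rwa [ENNReal.add_right_inj (by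
        exact ENNReal.mul_ne_top (by norm_num) ENNReal.ofReal_ne_top)] at h2
    have h := congrArg (fun x => (6:ENNReal)⁻¹ * x) h6
    simpa [← mul_assoc, ENNReal.inv_mul_cancel] using h
  have hqt : μ {(![true,false,false] : Fin 3 → Bool)} = ENNReal.ofReal ((1 - 2*p1)/6) := by
    rw [← hqdef]; exact hqv
  -- helper for set rewriting
  have hset : ∀ (I : Finset (Fin 3)) (S : Finset (Fin 3 → Bool)),
      (∀ f : Fin 3 → Bool, (∀ i ∈ I, f i = false) ↔ f ∈ S) →
      μ {f | ∀ i ∈ I, f i = false} = ∑ a ∈ S, μ {a} := by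
    intro I S h
    rw [show {f : Fin 3 → Bool | ∀ i ∈ I, f i = false} = ↑S from
      Set.ext fun f => by simpa using h f, hsum]
  -- real exponential computations
  have hx1 : (0:ℝ) < (p1 + (1 - 2 * p1) / 6) / p1 := by positivity
  have hx2 : (0:ℝ) < p1 / (2 * (p1 + (1 - 2 * p1) / 6) ^ 2) := by positivity
  have hx3 : (0:ℝ) < 8 * (p1 + (1 - 2 * p1) / 6) ^ 3 / p1 := by positivity
  have hr1 : Real.exp (-(Real.log ((p1 + (1 - 2 * p1) / 6) / p1) +
      (Real.log (p1 / (2 * (p1 + (1 - 2 * p1) / 6) ^ 2)) +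
      (Real.log (p1 / (2 * (p1 + (1 - 2 * p1) / 6) ^ 2)) +
      Real.log (8 * (p1 + (1 - 2 * p1) / 6) ^ 3 / p1))))) = 1/2 := by
    simp only [Real.exp_neg, Real.exp_add, Real.exp_log hx1, Real.exp_log hx2, Real.exp_log hx3]
    set a := p1 + (1 - 2 * p1) / 6 with ha
    have ha0 : a ≠ 0 := ne_of_gt hxpos
    have hp0 : p1 ≠ 0 := ne_of_gt hp1pos
    clear_value a
    field_simp
    ring
  have hr2 : Real.exp (-(Real.log ((p1 + (1 - 2 * p1) / 6) / p1) +
      (Real.log ((p1 + (1 - 2 * p1) / 6) / p1) +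
      (Real.log (p1 / (2 * (p1 + (1 - 2 * p1) / 6) ^ 2)) +
      (Real.log (p1 / (2 * (p1 + (1 - 2 * p1) / 6) ^ 2)) +
      (Real.log (p1 / (2 * (p1 + (1 - 2 * p1) / 6) ^ 2)) +
      Real.log (8 * (p1 + (1 - 2 * p1) / 6) ^ 3 / p1))))))) = p1 + (1 - 2*p1)/6 := by
    simp only [Real.exp_neg, Real.exp_add, Real.exp_log hx1, Real.exp_log hx2, Real.exp_log hx3]
    set a := p1 + (1 - 2 * p1) / 6 with ha
    have ha0 : a ≠ 0 := ne_of_gt hxpos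
    have hp0 : p1 ≠ 0 := ne_of_gt hp1pos
    clear_value a
    field_simp
    ring
  have hr3 : Real.exp (-(Real.log ((p1 + (1 - 2 * p1) / 6) / p1) +
      (Real.log ((p1 + (1 - 2 * p1) / 6) / p1) +
      (Real.log ((p1 + (1 - 2 * p1) / 6) / p1) +
      (Real.log (p1 / (2 * (p1 + (1 - 2 * p1) / 6) ^ 2)) +
      (Real.log (p1 / (2 * (p1 + (1 - 2 * p1) / 6) ^ 2)) +
      (Real.log (p1 / (2 * (p1 + (1 - 2 * p1) / 6) ^ 2)) +
      Real.log (8 * (p1 + (1 - 2 * p1) / 6) ^ 3 / p1)))))))) = p1 := by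
    simp only [Real.exp_neg, Real.exp_add, Real.exp_log hx1, Real.exp_log hx2, Real.exp_log hx3]
    set a := p1 + (1 - 2 * p1) / 6 with ha
    have ha0 : a ≠ 0 := ne_of_gt hxpos
    have hp0 : p1 ≠ 0 := ne_of_gt hp1pos
    clear_value a
    rw [show (a / p1) * ((a / p1) * ((a / p1) * ((p1 / (2 * a ^ 2)) * ((p1 / (2 * a ^ 2)) * ((p1 / (2 * a ^ 2)) * (8 * a ^ 3 / p1)))))) = p1⁻¹ by field_simp; ring, inv_inv]
  intro I
  have hIcases : ∀ J : Finset (Fin 3), J = ∅ ∨ J = {0} ∨ J = {1} ∨ J = {2} ∨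
      J = {0,1} ∨ J = {0,2} ∨ J = {1,2} ∨ J = {0,1,2} := by decide
  rcases hIcases I with hI | hI | hI | hI | hI | hI | hI | hI <;> subst hI
  · -- I = ∅
    rw [show {f : Fin 3 → Bool | ∀ i ∈ (∅ : Finset (Fin 3)), f i = false} = Set.univ by
      ext f; simp]
    rw [show Finset.univ.filter
        (fun T : Finset (Fin 3) => (T ∩ (∅ : Finset (Fin 3))).Nonempty)
        = (∅ : Finset (Finset (Fin 3))) from by decide]
    rw [Finset.sum_empty, neg_zero, Real.exp_zero, ENNReal.ofReal_one, measure_univ]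
  · -- I = {0}
    rw [hset _ {![false,false,false], ![false,true,false], ![false,false,true],
      ![false,true,true]} (by decide)]
    rw [Finset.sum_insert (by decide), Finset.sum_insert (by decide),
      Finset.sum_insert (by decide), Finset.sum_singleton]
    rw [hA0, hq2, hq3, hq4, hqv]
    rw [show Finset.univ.filter
        (fun T : Finset (Fin 3) => (T ∩ ({0} : Finset (Fin 3))).Nonempty)
        = ({{0}, {0,1}, {0,2}, {0,1,2}} : Finset (Finset (Fin 3))) from by decide]
    rw [Finset.sum_insert (by decide), Finset.sum_insert (by decide),
      Finset.sum_insert (by decide), Finset.sum_singleton]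
    rw [ν1 _ (by decide), ν2 _ (by decide), ν2 _ (by decide), ν3 _ (by decide), hr1]
    rw [← ENNReal.ofReal_add (by linarith) (by linarith),
      ← ENNReal.ofReal_add (by linarith) (by linarith),
      ← ENNReal.ofReal_add (by linarith) (by linarith)]
    congr 1
    ring
  · -- I = {1}
    rw [hset _ {![false,false,false], ![true,false,false], ![false,false,true],
      ![true,false,true]} (by decide)]
    rw [Finset.sum_insert (by decide), Finset.sum_insert (by decide),
      Finset.sum_insert (by decide), Finset.sum_singleton]
    rw [hA0, hq3, hq5, hqt, hqv]
    rw [show Finset.univ.filter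
        (fun T : Finset (Fin 3) => (T ∩ ({1} : Finset (Fin 3))).Nonempty)
        = ({{1}, {0,1}, {1,2}, {0,1,2}} : Finset (Finset (Fin 3))) from by decide]
    rw [Finset.sum_insert (by decide), Finset.sum_insert (by decide),
      Finset.sum_insert (by decide), Finset.sum_singleton]
    rw [ν1 _ (by decide), ν2 _ (by decide), ν2 _ (by decide), ν3 _ (by decide), hr1]
    rw [← ENNReal.ofReal_add (by linarith) (by linarith),
      ← ENNReal.ofReal_add (by linarith) (by linarith),
      ← ENNReal.ofReal_add (by linarith) (by linarith)]
    congr 1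
    ring
  · -- I = {2}
    rw [hset _ {![false,false,false], ![true,false,false], ![false,true,false],
      ![true,true,false]} (by decide)]
    rw [Finset.sum_insert (by decide), Finset.sum_insert (by decide),
      Finset.sum_insert (by decide), Finset.sum_singleton]
    rw [hA0, hq2, hq6, hqt, hqv]
    rw [show Finset.univ.filter
        (fun T : Finset (Fin 3) => (T ∩ ({2} : Finset (Fin 3))).Nonempty)
        = ({{2}, {0,2}, {1,2}, {0,1,2}} : Finset (Finset (Fin 3))) from by decide]
    rw [Finset.sum_insert (by decide), Finset.sum_insert (by decide),
      Finset.sum_insert (by decide), Finset.sum_singleton]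
    rw [ν1 _ (by decide), ν2 _ (by decide), ν2 _ (by decide), ν3 _ (by decide), hr1]
    rw [← ENNReal.ofReal_add (by linarith) (by linarith),
      ← ENNReal.ofReal_add (by linarith) (by linarith),
      ← ENNReal.ofReal_add (by linarith) (by linarith)]
    congr 1
    ring
  · -- I = {0,1}
    rw [hset _ {![false,false,false], ![false,false,true]} (by decide)]
    rw [Finset.sum_insert (by decide), Finset.sum_singleton]
    rw [hA0, hq3, hqv]
    rw [show Finset.univ.filter
        (fun T : Finset (Fin 3) => (T ∩ ({0,1} : Finset (Fin 3))).Nonempty)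
        = ({{0}, {1}, {0,1}, {0,2}, {1,2}, {0,1,2}} : Finset (Finset (Fin 3))) from by decide]
    rw [Finset.sum_insert (by decide), Finset.sum_insert (by decide),
      Finset.sum_insert (by decide), Finset.sum_insert (by decide),
      Finset.sum_insert (by decide), Finset.sum_singleton]
    rw [ν1 _ (by decide), ν1 _ (by decide), ν2 _ (by decide), ν2 _ (by decide),
      ν2 _ (by decide), ν3 _ (by decide), hr2]
    rw [← ENNReal.ofReal_add (by linarith) (by linarith)]
  · -- I = {0,2}
    rw [hset _ {![false,false,false], ![false,true,false]} (by decide)]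
    rw [Finset.sum_insert (by decide), Finset.sum_singleton]
    rw [hA0, hq2, hqv]
    rw [show Finset.univ.filter
        (fun T : Finset (Fin 3) => (T ∩ ({0,2} : Finset (Fin 3))).Nonempty)
        = ({{0}, {2}, {0,1}, {0,2}, {1,2}, {0,1,2}} : Finset (Finset (Fin 3))) from by decide]
    rw [Finset.sum_insert (by decide), Finset.sum_insert (by decide),
      Finset.sum_insert (by decide), Finset.sum_insert (by decide),
      Finset.sum_insert (by decide), Finset.sum_singleton]
    rw [ν1 _ (by decide), ν1 _ (by decide), ν2 _ (by decide), ν2 _ (by decide),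
      ν2 _ (by decide), ν3 _ (by decide), hr2]
    rw [← ENNReal.ofReal_add (by linarith) (by linarith)]
  · -- I = {1,2}
    rw [hset _ {![false,false,false], ![true,false,false]} (by decide)]
    rw [Finset.sum_insert (by decide), Finset.sum_singleton]
    rw [hA0, hqt]
    rw [show Finset.univ.filter
        (fun T : Finset (Fin 3) => (T ∩ ({1,2} : Finset (Fin 3))).Nonempty)
        = ({{1}, {2}, {0,1}, {0,2}, {1,2}, {0,1,2}} : Finset (Finset (Fin 3))) from by decide]
    rw [Finset.sum_insert (by decide), Finset.sum_insert (by decide),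
      Finset.sum_insert (by decide), Finset.sum_insert (by decide),
      Finset.sum_insert (by decide), Finset.sum_singleton]
    rw [ν1 _ (by decide), ν1 _ (by decide), ν2 _ (by decide), ν2 _ (by decide),
      ν2 _ (by decide), ν3 _ (by decide), hr2]
    rw [← ENNReal.ofReal_add (by linarith) (by linarith)]
  · -- I = {0,1,2}
    rw [hset _ {![false,false,false]} (by decide)]
    rw [Finset.sum_singleton, hA0]
    rw [show Finset.univ.filter
        (fun T : Finset (Fin 3) => (T ∩ ({0,1,2} : Finset (Fin 3))).Nonempty)
        = ({{0}, {1}, {2}, {0,1}, {0,2}, {1,2}, {0,1,2}} : Finset (Finset (Fin 3))) from by decide]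
    rw [Finset.sum_insert (by decide), Finset.sum_insert (by decide),
      Finset.sum_insert (by decide), Finset.sum_insert (by decide),
      Finset.sum_insert (by decide), Finset.sum_insert (by decide), Finset.sum_singleton]
    rw [ν1 _ (by decide), ν1 _ (by decide), ν1 _ (by decide), ν2 _ (by decide),
      ν2 _ (by decide), ν2 _ (by decide), ν3 _ (by decide), hr3]
end

section
/- Let (c_k)_{k≥0} be a sequence with c_0 ∈ (0,1), c_{k-1}c_{k+1} ≥ c_k^2 for all k ≥ 1, (c_k) decreasing with limit c_0^2 > 0. Then lim_{m→∞} m·log(c_{m+1}/c_m) = 0. -/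
open Filter
open scoped Topology

/-- Auxiliary: a summable antitone nonnegative sequence satisfies `n * b n → 0`. -/
lemma aux_nat_mul_tendsto_zero (b : ℕ → ℝ) (hnn : ∀ n, 0 ≤ b n) (hanti : Antitone b)
    (hsum : Summable b) :
    Tendsto (fun n : ℕ => (n : ℝ) * b n) atTop (𝓝 0) := by
  have htail : Tendsto (fun m : ℕ => ∑' k : ℕ, b (k + m)) atTop (𝓝 0) :=
    tendsto_sum_nat_add b
  have hdiv : Tendsto (fun n : ℕ => n / 2) atTop atTop := by
    apply tendsto_atTop_atTop.2
    intro m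
    exact ⟨2 * m, fun n hn => by omega⟩
  have hg : Tendsto (fun n : ℕ => 2 * ∑' k : ℕ, b (k + n / 2)) atTop (𝓝 0) := by
    have := (htail.comp hdiv).const_mul (2 : ℝ)
    simpa using this
  apply squeeze_zero (fun n => mul_nonneg (Nat.cast_nonneg n) (hnn n)) _ hg
  intro n
  have key : (↑(n - n / 2) : ℝ) * b n ≤ ∑' k : ℕ, b (k + n / 2) := by
    have h1 : ∑ k ∈ Finset.range (n - n / 2), b (k + n / 2) ≤ ∑' k : ℕ, b (k + n / 2) :=
      Summable.sum_le_tsum _ (fun k _ => hnn _) ((summable_nat_add_iff _).2 hsum)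
    refine le_trans ?_ h1
    have h2 : ∀ k ∈ Finset.range (n - n / 2), b n ≤ b (k + n / 2) := by
      intro k hk
      exact hanti (by simp at hk; omega)
    calc (↑(n - n / 2) : ℝ) * b n = ∑ _k ∈ Finset.range (n - n / 2), b n := by
          simp [mul_comm]
      _ ≤ ∑ k ∈ Finset.range (n - n / 2), b (k + n / 2) := Finset.sum_le_sum h2
  have hle : (n : ℝ) ≤ 2 * ↑(n - n / 2) := by
    have : n ≤ 2 * (n - n / 2) := by omega
    exact_mod_cast this
  calc (n : ℝ) * b n ≤ 2 * ↑(n - n / 2) * b n := mul_le_mul_of_nonneg_right hle (hnn n)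
    _ = 2 * (↑(n - n / 2) * b n) := by ring
    _ ≤ 2 * ∑' k : ℕ, b (k + n / 2) := by linarith

/-- Let `(c_k)_{k ≥ 0}` be a real sequence with `c_0 ∈ (0,1)`,
satisfying the log-convexity condition `c_{k-1} c_{k+1} ≥ c_k²` for all `k ≥ 1`,
decreasing, with limit `c_0² > 0`.  Then `lim_{m→∞} m · log (c_{m+1}/c_m) = 0`. -/
theorem stmt11 (c : ℕ → ℝ) (h0 : 0 < c 0) (h1 : c 0 < 1)
    (hconv : ∀ k : ℕ, 1 ≤ k → c k ^ 2 ≤ c (k - 1) * c (k + 1))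
    (hdec : Antitone c)
    (hlim : Tendsto c atTop (𝓝 (c 0 ^ 2))) :
    Tendsto (fun m : ℕ => (m : ℝ) * Real.log (c (m + 1) / c m)) atTop (𝓝 0) := by
  have hposlim : (0 : ℝ) < c 0 ^ 2 := pow_pos h0 2
  have hpos : ∀ n, 0 < c n := fun n => lt_of_lt_of_le hposlim (hdec.le_of_tendsto hlim n)
  set b : ℕ → ℝ := fun k => Real.log (c k) - Real.log (c (k + 1)) with hb
  have hnn : ∀ n, 0 ≤ b n := fun n =>
    sub_nonneg.2 (Real.log_le_log (hpos _) (hdec (Nat.le_succ n)))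
  have hanti : Antitone b := by
    apply antitone_nat_of_succ_le
    intro k
    have hc := hconv (k + 1) (by omega)
    simp only [Nat.add_sub_cancel] at hc
    have hlog : 2 * Real.log (c (k + 1)) ≤ Real.log (c k) + Real.log (c (k + 2)) := by
      have := Real.log_le_log (pow_pos (hpos (k + 1)) 2) hc
      rwa [Real.log_pow, Real.log_mul (hpos k).ne' (hpos (k + 2)).ne',
        show ((2 : ℕ) : ℝ) = 2 by norm_num] at this
    simp only [hb]
    have : c (k + 1 + 1) = c (k + 2) := rfl
    rw [this]
    linarith
  have hsum : Summable b := by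
    apply summable_of_sum_range_le (c := Real.log (c 0) - Real.log (c 0 ^ 2)) hnn
    intro n
    have htel : ∑ k ∈ Finset.range n, b k = Real.log (c 0) - Real.log (c n) := by
      induction n with
      | zero => simp
      | succ m ih => rw [Finset.sum_range_succ, ih]; simp only [hb]; ring
    rw [htel]
    have : Real.log (c 0 ^ 2) ≤ Real.log (c n) :=
      Real.log_le_log hposlim (hdec.le_of_tendsto hlim n)
    linarith
  have hmain := aux_nat_mul_tendsto_zero b hnn hanti hsum
  have : (fun m : ℕ => (m : ℝ) * Real.log (c (m + 1) / c m)) =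
      fun m : ℕ => -((m : ℝ) * b m) := by
    funext m
    rw [Real.log_div (hpos (m + 1)).ne' (hpos m).ne']
    simp [hb]; ring
  rw [this]
  simpa using hmain.neg
end

section
/- Fix n ≥ 2, x = (x_1,...,x_m) with 1 = x_1 > x_2 > ... > x_m ≥ 0, and α ∈ (0,1)^m with Σα_i = 1. For q ∈ (0,1], let X^{q} ∼ Σ_i α_i Π_{1-q x_i} on {0,1}^n, and let ν_n^q be the unique signed measure with X^q = X^{ν_n^q}. Then for intervals [ℓ] with 2 ≤ ℓ ≤ n, ν_n^q([ℓ]) = Σ_{j=0}^ℓ (-1)^{ℓ-j} C(ℓ,j) log Σ_i α_i x_i^{n-j} is independent of q; and ν_n^q({1}) = -log q + log(Σα_i x_i^{n-1}/Σα_i x_i^n) ≥ -log q, and ν_n^q([2]) ≥ 0. Consequently, membership of X^q([n]) in R is independent of q ∈ (0,1]. -/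
open Finset

private lemma alt0 (ℓ : ℕ) (hℓ : 1 ≤ ℓ) :
    ∑ j ∈ range (ℓ + 1), (-1 : ℝ) ^ (ℓ - j) * (ℓ.choose j) = 0 := by
  have h1 : ∑ j ∈ range (ℓ + 1), (-1 : ℝ) ^ (ℓ - j) * (ℓ.choose j)
      = ∑ j ∈ range (ℓ + 1), (-1 : ℝ) ^ (ℓ - j) * (ℓ.choose (ℓ - j)) := by
    refine Finset.sum_congr rfl fun j hj => ?_
    rw [mem_range] at hj
    rw [Nat.choose_symm (by omega)]
  have h2 := Finset.sum_range_reflect (fun t => (-1 : ℝ) ^ t * (ℓ.choose t)) (ℓ + 1)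
  simp only [Nat.add_sub_cancel] at h2
  rw [h1, h2]
  have h3 := Int.alternating_sum_range_choose_of_ne (n := ℓ) (by omega)
  exact_mod_cast h3

private lemma alt1 (ℓ : ℕ) (hℓ : 2 ≤ ℓ) :
    ∑ j ∈ range (ℓ + 1), (-1 : ℝ) ^ (ℓ - j) * (ℓ.choose j) * j = 0 := by
  obtain ⟨L, rfl⟩ : ∃ L, ℓ = L + 1 := ⟨ℓ - 1, by omega⟩
  rw [Finset.sum_range_succ']
  simp only [Nat.cast_zero, mul_zero, add_zero]
  have h : ∀ k ∈ range (L + 1), (-1 : ℝ) ^ (L + 1 - (k + 1)) * ((L + 1).choose (k + 1)) * ((k + 1 : ℕ) : ℝ)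
      = (L + 1) * ((-1 : ℝ) ^ (L - k) * (L.choose k)) := by
    intro k hk
    rw [mem_range] at hk
    have hc : (L + 1).choose (k + 1) * (k + 1) = (L + 1) * L.choose k :=
      (Nat.add_one_mul_choose_eq L k).symm
    have hc' : ((L + 1).choose (k + 1) : ℝ) * ((k + 1 : ℕ) : ℝ) = ((L:ℝ) + 1) * (L.choose k : ℝ) := by
      exact_mod_cast congrArg (Nat.cast : ℕ → ℝ) hc
    rw [show L + 1 - (k + 1) = L - k by omega]
    linear_combination ((-1:ℝ)^(L-k)) * hc' 
  rw [Finset.sum_congr rfl h, ← Finset.mul_sum, alt0 L (by omega), mul_zero]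

private lemma mob_inner {ι : Type*} [DecidableEq ι] (K L : Finset ι) (hL : L ⊆ K) :
    ∑ J ∈ K.powerset.filter (fun J => L ⊆ J), (-1 : ℝ) ^ (K.card - J.card)
      = if L = K then 1 else 0 := by
  have himg : K.powerset.filter (fun J => L ⊆ J) = (K \ L).powerset.image (fun M => M ∪ L) := by
    ext J
    simp only [mem_filter, mem_powerset, mem_image]
    constructor
    · intro ⟨hJK, hLJ⟩
      exact ⟨J \ L, sdiff_subset_sdiff hJK le_rfl, Finset.sdiff_union_of_subset hLJ⟩
    · rintro ⟨M, hM, rfl⟩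
      exact ⟨Finset.union_subset (hM.trans (Finset.sdiff_subset)) hL, Finset.subset_union_right⟩
  have hinj : ∀ M ∈ (K \ L).powerset, ∀ M' ∈ (K \ L).powerset, M ∪ L = M' ∪ L → M = M' := by
    intro M hM M' hM' hMM
    rw [mem_powerset] at hM hM'
    have d1 : Disjoint M L := (Finset.sdiff_disjoint.mono_left hM)
    have d2 : Disjoint M' L := (Finset.sdiff_disjoint.mono_left hM')
    rw [← Finset.union_sdiff_cancel_right d1, hMM, Finset.union_sdiff_cancel_right d2]
  rw [himg, Finset.sum_image hinj]
  have hcard : ∀ M ∈ (K \ L).powerset,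
      (-1 : ℝ) ^ (K.card - (M ∪ L).card) = (-1 : ℝ) ^ ((K \ L).card) * (-1 : ℝ) ^ M.card := by
    intro M hM
    rw [mem_powerset] at hM
    have d1 : Disjoint M L := (Finset.sdiff_disjoint.mono_left hM)
    have h1 : (M ∪ L).card = M.card + L.card := Finset.card_union_of_disjoint d1
    have h2 : (K \ L).card = K.card - L.card := Finset.card_sdiff_of_subset hL
    have h3 : M.card ≤ K.card - L.card := h2 ▸ Finset.card_le_card hM
    have h4 : L.card ≤ K.card := Finset.card_le_card hL
    rw [h1, h2, show K.card - (M.card + L.card) = K.card - L.card - M.card by omega]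
    rw [show K.card - L.card = (K.card - L.card - M.card) + M.card by omega, pow_add,
      Nat.add_sub_cancel, mul_assoc, ← pow_add, ← two_mul, pow_mul, neg_one_sq, one_pow, mul_one]
  rw [Finset.sum_congr rfl hcard, ← Finset.mul_sum]
  have hps : (∑ M ∈ (K \ L).powerset, (-1 : ℝ) ^ M.card)
      = if K \ L = ∅ then 1 else 0 := by
    have := Finset.sum_powerset_neg_one_pow_card (x := K \ L)
    exact_mod_cast congrArg (Int.cast : ℤ → ℝ) this
  rw [hps]
  by_cases h : L = K
  · subst h; simp
  · have : K \ L ≠ ∅ := fun hc =>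
      h (Finset.Subset.antisymm hL (Finset.sdiff_eq_empty_iff_subset.mp hc))
    simp [h, this]

private lemma mobius {ι : Type*} [DecidableEq ι] (g : Finset ι → ℝ) (K : Finset ι) :
    ∑ J ∈ K.powerset, (-1 : ℝ) ^ (K.card - J.card) * ∑ L ∈ J.powerset, g L = g K := by
  simp_rw [Finset.mul_sum]
  rw [Finset.sum_comm' (t' := K.powerset) (s' := fun L => K.powerset.filter (fun J => L ⊆ J))
    (by
      intro J L
      simp only [mem_powerset, mem_filter, mem_powerset]
      constructor
      · rintro ⟨h1, h2⟩; exact ⟨⟨h1, h2⟩, h2.trans h1⟩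
      · rintro ⟨⟨h1, h2⟩, _⟩; exact ⟨h1, h2⟩)]
  have : ∀ L ∈ K.powerset,
      ∑ J ∈ K.powerset.filter (fun J => L ⊆ J), (-1 : ℝ) ^ (K.card - J.card) * g L
        = (if L = K then 1 else 0) * g L := by
    intro L hL
    rw [← Finset.sum_mul, mob_inner K L (mem_powerset.mp hL)]
  rw [Finset.sum_congr rfl this]
  simp only [ite_mul, one_mul, zero_mul]
  rw [Finset.sum_ite_eq' K.powerset K g]
  simp

private lemma key {n : ℕ} (c : ℕ → ℝ) (ν : Finset (Fin n) → ℝ) (hν0 : ν ∅ = 0)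
    (hν : ∀ I : Finset (Fin n),
      ∑ J ∈ Finset.univ.filter (fun J : Finset (Fin n) => (J ∩ I).Nonempty), ν J = c I.card)
    (K : Finset (Fin n)) :
    ν K = ∑ j ∈ range (K.card + 1),
      (-1 : ℝ) ^ (K.card - j) * ((K.card).choose j) * (c n - c (n - j)) := by
  have htot : ∑ J : Finset (Fin n), ν J = c n := by
    have h1 := hν Finset.univ
    rw [Finset.card_univ, Fintype.card_fin] at h1
    rw [← h1, ← Finset.sum_filter_add_sum_filter_not Finset.univ
      (fun J : Finset (Fin n) => (J ∩ Finset.univ).Nonempty) ν]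
    have h2 : Finset.univ.filter
        (fun J : Finset (Fin n) => ¬ (J ∩ Finset.univ).Nonempty) = {∅} := by
      ext J
      simp [Finset.not_nonempty_iff_eq_empty]
    rw [h2]
    simp [hν0]
  have hH : ∀ J : Finset (Fin n), ∑ L ∈ J.powerset, ν L = c n - c (n - J.card) := by
    intro J
    have h1 := hν Jᶜ
    rw [Finset.card_compl, Fintype.card_fin] at h1
    have h3 := Finset.sum_filter_add_sum_filter_not Finset.univ
      (fun L : Finset (Fin n) => (L ∩ Jᶜ).Nonempty) ν
    have h2 : Finset.univ.filter
        (fun L : Finset (Fin n) => ¬ (L ∩ Jᶜ).Nonempty) = J.powerset := by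
      ext L
      simp only [mem_filter, mem_univ, true_and, mem_powerset,
        Finset.not_nonempty_iff_eq_empty, Finset.eq_empty_iff_forall_notMem,
        Finset.mem_inter, Finset.mem_compl, not_and, not_not]
      constructor
      · intro h a ha; exact h a ha
      · intro h a ha; exact h ha
    rw [h1, h2, htot] at h3
    linarith
  have hm := mobius ν K
  rw [← hm]
  have hcong : ∀ J ∈ K.powerset, (-1 : ℝ) ^ (K.card - J.card) * ∑ L ∈ J.powerset, ν L
      = (fun t => (-1 : ℝ) ^ (K.card - t) * (c n - c (n - t))) J.card := by
    intro J _
    rw [hH J]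
  rw [Finset.sum_congr rfl hcong,
    Finset.sum_powerset_apply_card (fun t => (-1 : ℝ) ^ (K.card - t) * (c n - c (n - t)))]
  refine Finset.sum_congr rfl fun j _ => ?_
  rw [nsmul_eq_mul]
  ring

/-- Fix `n ≥ 2`, `x = (x₁, …, x_m)` with `1 = x₁ > x₂ > … > x_m ≥ 0`,
and `α ∈ (0,1)^m` with `∑ αᵢ = 1`.  For `q ∈ (0,1]` let `X^q ∼ ∑ᵢ αᵢ Π_{1 - q xᵢ}` on
`{0,1}^n`, so that `P(X^q ≡ 0 on I) = ∑ᵢ αᵢ (q xᵢ)^{|I|}`, and let `ν` be the unique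
signed measure with `X^q = X^ν`, i.e. `∑_{J ∩ I ≠ ∅} ν J = - log P(X^q ≡ 0 on I)`.
Then for intervals `[ℓ]` with `2 ≤ ℓ ≤ n`,
`ν [ℓ] = ∑_{j=0}^ℓ (-1)^{ℓ-j} C(ℓ,j) log ∑ᵢ αᵢ xᵢ^{n-j}` is independent of `q`;
moreover `ν {1} = - log q + log (∑ᵢ αᵢ xᵢ^{n-1} / ∑ᵢ αᵢ xᵢⁿ) ≥ - log q` and
`ν [2] ≥ 0`.  Consequently, membership of `X^q` in `R` (nonnegativity of `ν`) is
independent of `q ∈ (0,1]`. -/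
theorem stmt17 (n m : ℕ) (hn : 2 ≤ n) (hm : 1 ≤ m)
    (x : Fin m → ℝ) (hx1 : x ⟨0, by omega⟩ = 1) (hanti : StrictAnti x)
    (hxlast : 0 ≤ x ⟨m - 1, by omega⟩)
    (α : Fin m → ℝ) (hα : ∀ i, α i ∈ Set.Ioo (0 : ℝ) 1) (hsum : ∑ i, α i = 1)
    (q : ℝ) (hq : q ∈ Set.Ioc (0 : ℝ) 1)
    (ν : Finset (Fin n) → ℝ) (hν0 : ν ∅ = 0)
    (hν : ∀ I : Finset (Fin n),
      ∑ J ∈ Finset.univ.filter (fun J : Finset (Fin n) => (J ∩ I).Nonempty), ν J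
        = - Real.log (∑ i, α i * (q * x i) ^ I.card)) :
    (∀ ℓ : ℕ, 2 ≤ ℓ → ℓ ≤ n →
      ν (Finset.univ.filter (fun i : Fin n => (i : ℕ) < ℓ))
        = ∑ j ∈ Finset.range (ℓ + 1),
            (-1 : ℝ) ^ (ℓ - j) * (ℓ.choose j) * Real.log (∑ i, α i * x i ^ (n - j))) ∧
    (ν {⟨0, by omega⟩}
        = - Real.log q
          + Real.log ((∑ i, α i * x i ^ (n - 1)) / (∑ i, α i * x i ^ n))) ∧
    (- Real.log q ≤ ν {⟨0, by omega⟩}) ∧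
    (0 ≤ ν (Finset.univ.filter (fun i : Fin n => (i : ℕ) < 2))) ∧
    ((∀ T, 0 ≤ ν T) → ∀ q' ∈ Set.Ioc (0 : ℝ) 1, ∀ ν' : Finset (Fin n) → ℝ,
      ν' ∅ = 0 →
      (∀ I : Finset (Fin n),
        ∑ J ∈ Finset.univ.filter (fun J : Finset (Fin n) => (J ∩ I).Nonempty), ν' J
          = - Real.log (∑ i, α i * (q' * x i) ^ I.card)) →
      ∀ T, 0 ≤ ν' T) := by
  -- basic facts about x and α
  have hx0 : ∀ i : Fin m, 0 ≤ x i := by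
    intro i
    refine le_trans hxlast (hanti.antitone ?_)
    rw [Fin.le_def]
    have := i.isLt
    simp only []
    omega
  have hxle1 : ∀ i : Fin m, x i ≤ 1 := by
    intro i
    rw [← hx1]
    refine hanti.antitone ?_
    rw [Fin.le_def]
    simp only []
    omega
  have hApos : ∀ k : ℕ, 0 < ∑ i, α i * x i ^ k := by
    intro k
    refine Finset.sum_pos' (fun i _ => mul_nonneg (hα i).1.le (pow_nonneg (hx0 i) k)) ?_
    refine ⟨⟨0, by omega⟩, Finset.mem_univ _, ?_⟩
    rw [hx1, one_pow, mul_one]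
    exact (hα _).1
  have hAmono : ∀ k : ℕ, (∑ i, α i * x i ^ (k + 1)) ≤ ∑ i, α i * x i ^ k := by
    intro k
    refine Finset.sum_le_sum fun i _ => ?_
    exact mul_le_mul_of_nonneg_left
      (pow_le_pow_of_le_one (hx0 i) (hxle1 i) (Nat.le_succ k)) (hα i).1.le
  have hlogP : ∀ r : ℝ, 0 < r → ∀ k : ℕ,
      Real.log (∑ i, α i * (r * x i) ^ k)
        = k * Real.log r + Real.log (∑ i, α i * x i ^ k) := by
    intro r hr k
    have h1 : (∑ i, α i * (r * x i) ^ k) = r ^ k * ∑ i, α i * x i ^ k := by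
      rw [Finset.mul_sum]
      exact Finset.sum_congr rfl fun i _ => by rw [mul_pow]; ring
    rw [h1, Real.log_mul (pow_ne_zero k hr.ne') (hApos k).ne', Real.log_pow]
  -- main formula for sets of size ≥ 2
  have hmain : ∀ r : ℝ, 0 < r → ∀ μ : Finset (Fin n) → ℝ, μ ∅ = 0 →
      (∀ I : Finset (Fin n),
        ∑ J ∈ Finset.univ.filter (fun J : Finset (Fin n) => (J ∩ I).Nonempty), μ J
          = - Real.log (∑ i, α i * (r * x i) ^ I.card)) →
      ∀ K : Finset (Fin n), 2 ≤ K.card →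
      μ K = ∑ j ∈ range (K.card + 1),
        (-1 : ℝ) ^ (K.card - j) * ((K.card).choose j)
          * Real.log (∑ i, α i * x i ^ (n - j)) := by
    intro r hr μ hμ0 hμ K hK2
    have hKn : K.card ≤ n := by
      have := Finset.card_le_univ K
      simpa using this
    have hk := key (fun k => - Real.log (∑ i, α i * (r * x i) ^ k)) μ hμ0 (fun I => hμ I) K
    rw [hk]
    have hterm : ∀ j ∈ range (K.card + 1),
        (-1 : ℝ) ^ (K.card - j) * ((K.card).choose j) *
          ((fun k => - Real.log (∑ i, α i * (r * x i) ^ k)) n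
            - (fun k => - Real.log (∑ i, α i * (r * x i) ^ k)) (n - j))
        = (-1 : ℝ) ^ (K.card - j) * ((K.card).choose j)
            * Real.log (∑ i, α i * x i ^ (n - j))
          - ((-1 : ℝ) ^ (K.card - j) * ((K.card).choose j) * j) * Real.log r
          - ((-1 : ℝ) ^ (K.card - j) * ((K.card).choose j))
            * Real.log (∑ i, α i * x i ^ n) := by
      intro j hj
      rw [mem_range] at hj
      simp only []
      rw [hlogP r hr n, hlogP r hr (n - j)]
      have hcast : ((n - j : ℕ) : ℝ) = (n : ℝ) - j := by
        have hjn : j ≤ n := by omega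
        push_cast [hjn]
        ring
      rw [hcast]
      ring
    rw [Finset.sum_congr rfl hterm, Finset.sum_sub_distrib, Finset.sum_sub_distrib,
      ← Finset.sum_mul, ← Finset.sum_mul, alt1 K.card hK2, alt0 K.card (by omega),
      zero_mul, zero_mul, sub_zero, sub_zero]
  -- formula for singletons
  have hsingle : ∀ r : ℝ, 0 < r → ∀ μ : Finset (Fin n) → ℝ, μ ∅ = 0 →
      (∀ I : Finset (Fin n),
        ∑ J ∈ Finset.univ.filter (fun J : Finset (Fin n) => (J ∩ I).Nonempty), μ J
          = - Real.log (∑ i, α i * (r * x i) ^ I.card)) →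
      ∀ K : Finset (Fin n), K.card = 1 →
      μ K = - Real.log r
        + Real.log ((∑ i, α i * x i ^ (n - 1)) / (∑ i, α i * x i ^ n)) := by
    intro r hr μ hμ0 hμ K hK1
    have hk := key (fun k => - Real.log (∑ i, α i * (r * x i) ^ k)) μ hμ0 (fun I => hμ I) K
    rw [hk, hK1]
    rw [Finset.sum_range_succ, Finset.sum_range_one]
    simp only [Nat.choose_self, Nat.choose_zero_right, Nat.cast_one, Nat.sub_self, pow_zero,
      Nat.sub_zero, pow_one, one_mul, mul_one, sub_self, mul_zero, neg_mul, zero_add]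
    rw [hlogP r hr n, hlogP r hr (n - 1),
      Real.log_div (hApos (n - 1)).ne' (hApos n).ne']
    have hcast : ((n - 1 : ℕ) : ℝ) = (n : ℝ) - 1 := by
      have h1 : 1 ≤ n := by omega
      push_cast [h1]
      ring
    rw [hcast]
    ring
  -- cardinality of initial segments
  have hcard : ∀ ℓ : ℕ, ℓ ≤ n →
      (Finset.univ.filter (fun i : Fin n => (i : ℕ) < ℓ)).card = ℓ := by
    intro ℓ hℓ
    have hb : (Finset.univ.filter (fun i : Fin n => (i : ℕ) < ℓ)).card = (range ℓ).card := by
      apply Finset.card_bij (fun (i : Fin n) _ => (i : ℕ))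
      · intro a ha
        rw [mem_range]
        exact (Finset.mem_filter.mp ha).2
      · intro a _ b _ h
        exact Fin.val_injective h
      · intro b hb
        rw [mem_range] at hb
        exact ⟨⟨b, lt_of_lt_of_le hb hℓ⟩, Finset.mem_filter.mpr ⟨Finset.mem_univ _, hb⟩, rfl⟩
    rw [hb, Finset.card_range]
  have hratio : (0 : ℝ) ≤ Real.log ((∑ i, α i * x i ^ (n - 1)) / (∑ i, α i * x i ^ n)) := by
    refine Real.log_nonneg ((one_le_div (hApos n)).2 ?_)
    have := hAmono (n - 1)
    rwa [show n - 1 + 1 = n by omega] at this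
  refine ⟨?_, ?_, ?_, ?_, ?_⟩
  · -- part 1
    intro ℓ hℓ2 hℓn
    have hc := hcard ℓ hℓn
    have h := hmain q hq.1 ν hν0 hν _ (by rw [hc]; exact hℓ2)
    rw [h, hc]
  · -- part 2
    exact hsingle q hq.1 ν hν0 hν _ (Finset.card_singleton _)
  · -- part 3
    rw [hsingle q hq.1 ν hν0 hν _ (Finset.card_singleton _)]
    linarith
  · -- part 4
    have hc2 := hcard 2 hn
    rw [hmain q hq.1 ν hν0 hν _ (by rw [hc2]), hc2]
    have hcs : (∑ i, α i * x i ^ (n - 1)) ^ 2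
        ≤ (∑ i, α i * x i ^ (n - 2)) * (∑ i, α i * x i ^ n) := by
      have h := Finset.sum_mul_sq_le_sq_mul_sq Finset.univ
        (fun i => Real.sqrt (α i * x i ^ (n - 2))) (fun i => Real.sqrt (α i * x i ^ n))
      have e1 : ∀ i : Fin m, Real.sqrt (α i * x i ^ (n - 2)) * Real.sqrt (α i * x i ^ n)
          = α i * x i ^ (n - 1) := by
        intro i
        rw [← Real.sqrt_mul (mul_nonneg (hα i).1.le (pow_nonneg (hx0 i) _)) _]
        have hxp : x i ^ (n - 2) * x i ^ n = (x i ^ (n - 1)) ^ 2 := by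
          rw [← pow_add, ← pow_mul]
          congr 1
          omega
        have heq : (α i * x i ^ (n - 2)) * (α i * x i ^ n)
            = (α i * x i ^ (n - 1)) ^ 2 := by
          rw [mul_pow, ← hxp]
          ring
        rw [heq, Real.sqrt_sq (mul_nonneg (hα i).1.le (pow_nonneg (hx0 i) _))]
      have e2 : ∀ (i : Fin m) (k : ℕ), Real.sqrt (α i * x i ^ k) ^ 2 = α i * x i ^ k :=
        fun i k => Real.sq_sqrt (mul_nonneg (hα i).1.le (pow_nonneg (hx0 i) k))
      calc (∑ i, α i * x i ^ (n - 1)) ^ 2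
          = (∑ i, Real.sqrt (α i * x i ^ (n - 2)) * Real.sqrt (α i * x i ^ n)) ^ 2 := by
            rw [Finset.sum_congr rfl fun i _ => (e1 i).symm]
        _ ≤ (∑ i, Real.sqrt (α i * x i ^ (n - 2)) ^ 2) * ∑ i, Real.sqrt (α i * x i ^ n) ^ 2 := h
        _ = (∑ i, α i * x i ^ (n - 2)) * ∑ i, α i * x i ^ n := by
            rw [Finset.sum_congr rfl fun i _ => e2 i (n - 2),
              Finset.sum_congr rfl fun i _ => e2 i n]
    have hlog2 : 2 * Real.log (∑ i, α i * x i ^ (n - 1))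
        ≤ Real.log (∑ i, α i * x i ^ (n - 2)) + Real.log (∑ i, α i * x i ^ n) := by
      have hp : 2 * Real.log (∑ i, α i * x i ^ (n - 1))
          = Real.log ((∑ i, α i * x i ^ (n - 1)) ^ 2) := by
        rw [Real.log_pow]
        norm_num
      rw [hp, ← Real.log_mul (hApos (n - 2)).ne' (hApos n).ne']
      exact Real.log_le_log (pow_pos (hApos (n - 1)) 2) hcs
    rw [Finset.sum_range_succ, Finset.sum_range_succ, Finset.sum_range_one]
    norm_num
    linarith
  · -- part 5
    intro hpos q' hq' ν' hν'0 hν' T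
    rcases Nat.lt_or_ge T.card 2 with hT | hT
    · interval_cases h : T.card
      · rw [Finset.card_eq_zero.mp h, hν'0]
      · rw [hsingle q' hq'.1 ν' hν'0 hν' T h]
        have hlq' : Real.log q' ≤ 0 := Real.log_nonpos hq'.1.le hq'.2
        linarith
    · rw [hmain q' hq'.1 ν' hν'0 hν' T hT, ← hmain q hq.1 ν hν0 hν T hT]
      exact hpos T
end
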